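/- arXiv:2404.08837 — 2 statements merged into one kernel-verified Lean document; each statement's English description precedes it below -/
import Mathlib

section
/- Let A be an m × n totally unimodular integer matrix and suppose P = {x ∈ ℝ^n : A x = 𝟙 and 0 ≤ x ≤ 1 (componentwise)} is nonempty, where 𝟙 denotes the all-ones vector in ℝ^m. Then for every c ∈ ℝ^n there exists x* ∈ P whose coordinates all lie in {0, 1} such that ⟨c, x*⟩ ≤ ⟨c, x⟩ for all x ∈ P; i.e., the linear program over P attains its minimum at a 0/1 point. -/
/-!
A linear functional attains its minimum over the compact convex set `P` at an extreme point
(Krein–Milman). At an extreme point `x` of `P`, the columns of `A` indexed by the fractional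
coordinates of `x` are linearly independent: a kernel vector supported there would let `x` move
both ways inside `P`. Choosing as many independent rows, the fractional part of `x` solves a square
system whose matrix is an invertible, hence unimodular, submatrix of `A` and whose right-hand side
is integral. So it is integral, and `x` has no fractional coordinates at all.
-/

open Set Filter Topology Matrix

section KreinMilman

variable {E : Type*} [AddCommGroup E] [Module ℝ E] [TopologicalSpace E] [T2Space E]
  [IsTopologicalAddGroup E] [ContinuousSMul ℝ E] [LocallyConvexSpace ℝ E] {s : Set E}

theorem IsCompact.exists_mem_extremePoints_isMinOn (hs : IsCompact s) (hne : s.Nonempty)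
    (l : E →L[ℝ] ℝ) : ∃ x ∈ s.extremePoints ℝ, IsMinOn l s x := by
  obtain ⟨z, hzs, hz⟩ := hs.exists_isMinOn hne l.continuous.continuousOn
  have hexp : IsExposed ℝ s {x ∈ s | ∀ y ∈ s, l x ≤ l y} := fun _ => ⟨-l, by simp⟩
  obtain ⟨x, hx⟩ := (hexp.isCompact hs).extremePoints_nonempty ⟨z, hzs, fun _ hy => hz hy⟩
  exact ⟨x, hexp.isExtreme.extremePoints_subset_extremePoints hx, fun y hy => hx.1.2 y hy⟩

end KreinMilman

theorem eq_zero_of_add_mem_of_sub_mem_of_mem_extremePoints {E : Type*} [AddCommGroup E]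
    [Module ℝ E] {s : Set E} {x v : E} (hx : x ∈ s.extremePoints ℝ) (hadd : x + v ∈ s)
    (hsub : x - v ∈ s) : v = 0 := by
  have hmid : x ∈ openSegment ℝ (x - v) (x + v) :=
    ⟨1 / 2, 1 / 2, by norm_num, by norm_num, by norm_num, by module⟩
  simpa using hx.2 hsub hadd hmid

theorem SignType.isUnit_cast_of_ne_zero {s : SignType} (hs : (s : ℤ) ≠ 0) : IsUnit (s : ℤ) := by
  cases s <;> simp_all

namespace Matrix

theorem mulVec_eq_submatrix_mulVec_add_submatrix_mulVec {ι κ R : Type*} [Fintype κ]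
    [NonUnitalNonAssocSemiring R] (M : Matrix ι κ R) (x : κ → R) (p : κ → Prop)
    [DecidablePred p] :
    M *ᵥ x = M.submatrix id (Subtype.val : {j // p j} → κ) *ᵥ (x ∘ Subtype.val) +
      M.submatrix id (Subtype.val : {j // ¬p j} → κ) *ᵥ (x ∘ Subtype.val) :=
  funext fun _ => (Fintype.sum_subtype_add_sum_subtype p _).symm

theorem exists_submatrix_det_ne_zero_of_mulVec_injective {K ι κ : Type*} [Field K] [Finite ι]
    [Fintype κ] [DecidableEq κ] {M : Matrix ι κ K} (hM : Function.Injective M.mulVec) :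
    ∃ r : κ → ι, (M.submatrix r id).det ≠ 0 := by
  have hspan : Submodule.span K (range M.row) = ⊤ := by
    apply Submodule.eq_top_of_finrank_eq
    rw [← rank_eq_finrank_span_row, rank, LinearMap.finrank_range_of_inj hM]
  obtain ⟨τ, a, -, hspan', hli⟩ := exists_linearIndependent' K M.row
  let e := (Pi.basisFun K κ).indexEquiv (Module.Basis.mk hli (by rw [hspan', hspan]))
  refine ⟨a ∘ e, ?_⟩
  rw [← isUnit_iff_ne_zero, ← isUnit_iff_isUnit_det, ← linearIndependent_rows_iff_isUnit]
  exact hli.comp e e.injective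

namespace IsTotallyUnimodular

variable {ι κ : Type*} {A : Matrix ι κ ℤ}

theorem mem_range_of_mulVec_mem_range {K : Type*} [Field K] [Finite ι] [Fintype κ]
    (hA : A.IsTotallyUnimodular) (hinj : Function.Injective (A.map (Int.cast : ℤ → K)).mulVec)
    {x : κ → K} (hx : ∀ i, (A.map (Int.cast : ℤ → K) *ᵥ x) i ∈ (Int.castRingHom K).range)
    (j : κ) : x j ∈ (Int.castRingHom K).range := by
  classical
  obtain ⟨r, hr⟩ := exists_submatrix_det_ne_zero_of_mulVec_injective hinj
  set B := A.submatrix r id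
  have hB : (A.map (Int.cast : ℤ → K)).submatrix r id = (Int.castRingHom K).mapMatrix B := rfl
  have hdet : IsUnit B.det := by
    obtain ⟨s, hs⟩ := (isTotallyUnimodular_iff_fintype A).mp hA κ r id
    rw [← hs]
    refine SignType.isUnit_cast_of_ne_zero fun h => hr ?_
    rw [hB, ← RingHom.map_det, ← hs, h, map_zero]
  choose b hb using hx
  set z := B⁻¹ *ᵥ (b ∘ r)
  have hBz : B *ᵥ z = b ∘ r := by
    rw [mulVec_mulVec, mul_nonsing_inv B hdet, one_mulVec]
  have hxz : x = Int.cast ∘ z := by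
    refine (mulVec_injective_iff_isUnit.mpr <|
      (isUnit_iff_isUnit_det _).mpr (isUnit_iff_ne_zero.mpr hr)) (funext fun k => ?_)
    change (A.map Int.cast *ᵥ x) (r k) = _
    rw [← hb (r k), hB, show b (r k) = (B *ᵥ z) k from (congrFun hBz k).symm]
    exact RingHom.map_mulVec (Int.castRingHom K) B z k
  exact ⟨z j, by rw [hxz]; rfl⟩

end IsTotallyUnimodular

end Matrix

def boxPolytope {ι κ : Type*} [Fintype κ] (A : Matrix ι κ ℝ) (b : ι → ℝ) : Set (κ → ℝ) :=
  {x | A *ᵥ x = b} ∩ Icc 0 1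

section boxPolytope

variable {ι κ : Type*} [Fintype κ]

theorem isCompact_boxPolytope (A : Matrix ι κ ℝ) (b : ι → ℝ) : IsCompact (boxPolytope A b) :=
  isCompact_Icc.inter_left <|
    isClosed_eq (continuous_const.matrix_mulVec continuous_id) continuous_const

theorem boxPolytope_add_smul_mem_nhds {A : Matrix ι κ ℝ} {b : ι → ℝ} {x d : κ → ℝ}
    (hx : x ∈ boxPolytope A b) (hAd : A *ᵥ d = 0) (hd : ∀ j, x j ∉ Ioo 0 1 → d j = 0) :
    ∀ᶠ t in 𝓝 (0 : ℝ), x + t • d ∈ boxPolytope A b := by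
  have hbox : ∀ j, ∀ᶠ t in 𝓝 (0 : ℝ), x j + t * d j ∈ Icc 0 1 := by
    intro j
    by_cases hj : x j ∈ Ioo 0 1
    · have : Tendsto (fun t : ℝ => x j + t * d j) (𝓝 0) (𝓝 (x j)) :=
        Continuous.tendsto' (by fun_prop) 0 (x j) (by simp)
      exact (this.eventually (isOpen_Ioo.mem_nhds hj)).mono fun _ h => Ioo_subset_Icc_self h
    · simp only [hd j hj, mul_zero, add_zero]
      exact .of_forall fun _ => ⟨hx.2.1 j, hx.2.2 j⟩
  filter_upwards [eventually_all.mpr hbox] with t ht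
  refine ⟨?_, pi_univ_Icc (0 : κ → ℝ) 1 ▸ fun j _ => ht j⟩
  rw [mem_ofPred_eq, mulVec_add, mulVec_smul, hAd, smul_zero, add_zero]
  exact hx.1

theorem injective_submatrix_mulVec_of_mem_extremePoints_boxPolytope {A : Matrix ι κ ℝ}
    {b : ι → ℝ} {x : κ → ℝ} (hx : x ∈ (boxPolytope A b).extremePoints ℝ) :
    Function.Injective (A.submatrix id (Subtype.val : {j // x j ∈ Ioo 0 1} → κ)).mulVec := by
  rw [← coe_mulVecLin, ← LinearMap.ker_eq_bot, ker_mulVecLin_eq_bot_iff]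
  intro v hv
  set d : κ → ℝ := fun j => if h : x j ∈ Ioo 0 1 then v ⟨j, h⟩ else 0
  have hAd : A *ᵥ d = 0 := by
    have hdp : d ∘ Subtype.val = v := funext fun j => dif_pos j.2
    have hdnp : d ∘ (Subtype.val : {j // x j ∉ Ioo 0 1} → κ) = 0 := funext fun j => dif_neg j.2
    rw [mulVec_eq_submatrix_mulVec_add_submatrix_mulVec _ _ (fun j => x j ∈ Ioo 0 1), hdp, hdnp,
      mulVec_zero, add_zero, hv]
  have hmem := boxPolytope_add_smul_mem_nhds hx.1 hAd fun j hj => dif_neg hj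
  have hmem' := (continuous_neg.tendsto' (0 : ℝ) 0 neg_zero).eventually hmem
  obtain ⟨t, ⟨hadd, hsub⟩, ht⟩ :=
    (((hmem.and hmem').filter_mono nhdsWithin_le_nhds).and self_mem_nhdsWithin).exists
    (f := 𝓝[≠] (0 : ℝ))
  rw [neg_smul, ← sub_eq_add_neg] at hsub
  have hd : d = 0 := (smul_eq_zero.mp
    (eq_zero_of_add_mem_of_sub_mem_of_mem_extremePoints hx hadd hsub)).resolve_left ht
  exact funext fun j => (dif_pos j.2).symm.trans (congrFun hd j)

theorem Matrix.IsTotallyUnimodular.eq_zero_or_eq_one_of_mem_extremePoints_boxPolytope [Finite ι]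
    {A : Matrix ι κ ℤ} (hA : A.IsTotallyUnimodular) {b : ι → ℝ}
    (hb : ∀ i, b i ∈ (Int.castRingHom ℝ).range) {x : κ → ℝ}
    (hx : x ∈ (boxPolytope (A.map (↑)) b).extremePoints ℝ) (j : κ) : x j = 0 ∨ x j = 1 := by
  set p : κ → Prop := fun j => x j ∈ Ioo 0 1
  have hx01 : ∀ j, ¬p j → x j = 0 ∨ x j = 1 := fun j hj => by
    rcases (hx.1.2.1 j).lt_or_eq with h0 | h0
    · exact .inr (by_contra fun h1 => hj ⟨h0, lt_of_le_of_ne (hx.1.2.2 j) h1⟩)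
    · exact .inl h0.symm
  set AF := A.submatrix id (Subtype.val : {j // p j} → κ)
  have hint : ∀ i, (AF.map (Int.cast : ℤ → ℝ) *ᵥ (x ∘ Subtype.val)) i ∈
      (Int.castRingHom ℝ).range := by
    intro i
    have hsplit := congrFun (mulVec_eq_submatrix_mulVec_add_submatrix_mulVec (A.map (↑)) x p) i
    rw [hx.1.1, Pi.add_apply] at hsplit
    change ((A.map (↑)).submatrix id Subtype.val *ᵥ (x ∘ Subtype.val)) i ∈ _
    rw [eq_sub_of_add_eq hsplit.symm]
    refine sub_mem (hb i) (Subring.sum_mem _ fun k _ => Subring.mul_mem _ ⟨A i k, rfl⟩ ?_)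
    rcases hx01 k k.2 with h | h
    · exact ⟨0, by simp [h]⟩
    · exact ⟨1, by simp [h]⟩
  by_contra hj
  have hpj : p j := by_contra fun hpj => hj (hx01 j hpj)
  obtain ⟨z, hz⟩ := (hA.submatrix id Subtype.val).mem_range_of_mulVec_mem_range
    (injective_submatrix_mulVec_of_mem_extremePoints_boxPolytope hx) hint ⟨j, hpj⟩
  have hz01 : (z : ℝ) ∈ Ioo 0 1 := by rw [show (z : ℝ) = x j from hz]; exact hpj
  simp only [mem_Ioo] at hz01
  norm_cast at hz01
  omega

end boxPolytope

/-- If `A` is a totally unimodular integer matrix and the polytope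
`P = {x : ℝ^n | A x = 𝟙, 0 ≤ x ≤ 1}` is nonempty, then for every cost vector `c`
the linear program `min ⟨c, x⟩ over P` attains its minimum at a point of `P` all of
whose coordinates lie in `{0, 1}`. -/
theorem lp_min_attained_at_zero_one_of_totallyUnimodular
    {m n : ℕ} (A : Matrix (Fin m) (Fin n) ℤ) (hA : A.IsTotallyUnimodular)
    (P : Set (Fin n → ℝ))
    (hP : P = {x : Fin n → ℝ | (∀ i, (A.map (Int.cast : ℤ → ℝ)).mulVec x i = 1) ∧
      ∀ j, 0 ≤ x j ∧ x j ≤ 1})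
    (hne : P.Nonempty) :
    ∀ c : Fin n → ℝ, ∃ xs ∈ P, (∀ j, xs j = 0 ∨ xs j = 1) ∧
      ∀ x ∈ P, ∑ j, c j * xs j ≤ ∑ j, c j * x j := by
  intro c
  have hPbox : P = boxPolytope (A.map (Int.cast : ℤ → ℝ)) 1 := by
    rw [hP]
    ext x
    simp [boxPolytope, funext_iff, Pi.le_def, forall_and]
  rw [hPbox] at hne ⊢
  obtain ⟨xs, hxs, hmin⟩ := (isCompact_boxPolytope _ _).exists_mem_extremePoints_isMinOn hne
    (∑ j, c j • ContinuousLinearMap.proj j)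
  refine ⟨xs, hxs.1, hA.eq_zero_or_eq_one_of_mem_extremePoints_boxPolytope (fun _ => one_mem _) hxs,
    fun x hx => by simpa using hmin hx⟩
end

section
/- Let V be a finite type, let E : V → V → Prop be a directed graph on V, and let s, f ∈ V with s ≠ f. Then the following are equivalent: (1) there exists x : V → V → ℤ with x v w ∈ {0, 1} for all v, w, with x v w = 0 whenever ¬E v w, and such that for every node n, (∑_{v} x v n) − (∑_{w} x n w) equals −1 if n = s, equals 1 if n = f, and equals 0 otherwise; (2) there is a directed path in E from s to f (i.e., Relation.ReflTransGen E s f holds). -/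
/-!
A `{0,1}` flow satisfying the conservation constraints has net inflow `-1` at `s` and `≤ 0`
at every vertex other than `f`. Summed over the set `R` of vertices reachable from `s` along
arcs carrying flow, the net inflow is `-1` if `f ∉ R`; but it equals the flow entering `R`
minus the flow leaving `R`, and nothing leaves `R`, so it is `≥ 0`. Hence `f ∈ R`.
Conversely, a path from `s` to `f` can be shortened to one without repeated vertices, and the
indicator of its arcs is a `{0,1}` flow whose net inflow telescopes to `[n = f] - [n = s]`.
-/

open Finset Relation

namespace List

theorem exists_nodup_isChain_cons_of_reflTransGen {α : Type*} {r : α → α → Prop} {a b : α}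
    (h : ReflTransGen r a b) :
    ∃ l, IsChain r (a :: l) ∧ (a :: l).Nodup ∧ (a :: l).getLast (cons_ne_nil _ _) = b := by
  induction h using ReflTransGen.head_induction_on with
  | refl => exact ⟨[], .singleton _, nodup_singleton _, rfl⟩
  | @head a c hac _ ih =>
    obtain ⟨l, hchain, hnodup, hlast⟩ := ih
    by_cases ha : a ∈ c :: l
    · -- cut the path at the later visit of `a`
      obtain ⟨l₁, l₂, hsplit⟩ := append_of_mem ha
      have hsuffix : a :: l₂ <:+ c :: l := hsplit ▸ suffix_append _ _
      refine ⟨l₂, hchain.suffix hsuffix, hnodup.sublist hsuffix.sublist, ?_⟩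
      rw [← hlast]
      simp only [hsplit, getLast_append_of_ne_nil _ (cons_ne_nil _ _)]
    · exact ⟨c :: l, hchain.cons_cons hac, nodup_cons.2 ⟨ha, hnodup⟩,
        by rw [getLast_cons_cons, hlast]⟩

theorem rel_of_mem_zip_tail {α : Type*} {r : α → α → Prop} {a b : α} :
    ∀ {l : List α}, IsChain r l → (a, b) ∈ l.zip l.tail → r a b
  | _ :: _ :: _, hchain, hmem => by
    rw [isChain_cons_cons] at hchain
    rcases mem_cons.1 hmem with hab | hmem
    · obtain ⟨rfl, rfl⟩ := Prod.mk.inj hab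
      exact hchain.1
    · exact rel_of_mem_zip_tail hchain.2 hmem

theorem Nodup.zip_tail {α : Type*} {l : List α} (h : l.Nodup) : (l.zip l.tail).Nodup :=
  Nodup.of_map Prod.snd <| by
    rw [map_snd_zip (by simp)]
    exact h.sublist (tail_sublist l)

end List

section NetInflow

variable {V : Type*} [Fintype V] {G : Type*} [AddCommGroup G]

def netInflow (x : V → V → G) (n : V) : G :=
  ∑ v, x v n - ∑ w, x n w

theorem netInflow_add (x y : V → V → G) (n : V) :
    netInflow (x + y) n = netInflow x n + netInflow y n := by
  simp only [netInflow, Pi.add_apply, sum_add_distrib]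
  abel

theorem sum_netInflow_eq [DecidableEq V] (x : V → V → G) (R : Finset V) :
    ∑ n ∈ R, netInflow x n = ∑ n ∈ R, ∑ v ∈ Rᶜ, x v n - ∑ n ∈ R, ∑ w ∈ Rᶜ, x n w := by
  have hsplit (g : V → G) : ∑ v, g v = ∑ v ∈ R, g v + ∑ v ∈ Rᶜ, g v :=
    (sum_add_sum_compl R g).symm
  have hinner : ∑ n ∈ R, ∑ v ∈ R, x v n = ∑ n ∈ R, ∑ w ∈ R, x n w := sum_comm
  simp only [netInflow, hsplit, sum_sub_distrib, sum_add_distrib, hinner]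
  abel

theorem sum_netInflow_nonneg [DecidableEq V] [PartialOrder G] [IsOrderedAddMonoid G] {x : V → V → G}
    (hx : ∀ v w, 0 ≤ x v w) {R : Finset V} (hR : ∀ v ∈ R, ∀ w ∉ R, x v w = 0) :
    0 ≤ ∑ n ∈ R, netInflow x n := by
  have hout : ∑ n ∈ R, ∑ w ∈ Rᶜ, x n w = 0 :=
    sum_eq_zero fun n hn => sum_eq_zero fun w hw => hR n hn w (mem_compl.1 hw)
  rw [sum_netInflow_eq, hout, sub_zero]
  exact sum_nonneg fun n _ => sum_nonneg fun v _ => hx v n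

theorem reflTransGen_support_of_netInflow [PartialOrder G] [IsOrderedAddMonoid G]
    {x : V → V → G} (hx : ∀ v w, 0 ≤ x v w) {s f : V}
    (hs : netInflow x s < 0) (hle : ∀ n, n ≠ f → netInflow x n ≤ 0) :
    ReflTransGen (fun v w => x v w ≠ 0) s f := by
  classical
  by_contra hf
  set R := univ.filter (ReflTransGen (fun v w => x v w ≠ 0) s)
  have hsR : s ∈ R := mem_filter.2 ⟨mem_univ _, .refl⟩
  have hclosed : ∀ v ∈ R, ∀ w ∉ R, x v w = 0 := fun v hv w hw => by
    by_contra hvw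
    exact hw (mem_filter.2 ⟨mem_univ _, (mem_filter.1 hv).2.tail hvw⟩)
  have hneg : ∑ n ∈ R, netInflow x n < ∑ _n ∈ R, 0 :=
    sum_lt_sum (fun n hn => hle n fun hnf => hf (hnf ▸ (mem_filter.1 hn).2)) ⟨s, hsR, hs⟩
  rw [sum_const_zero] at hneg
  exact hneg.not_ge (sum_netInflow_nonneg hx hclosed)

end NetInflow

section PathFlow

variable {V : Type*} [DecidableEq V]

/-- `pathFlow l a b` is the number of times the walk `l` traverses the arc `(a, b)`. -/
def pathFlow (l : List V) (a b : V) : ℤ :=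
  (l.zip l.tail).count (a, b)

theorem pathFlow_cons_cons (u v : V) (l : List V) :
    pathFlow (u :: v :: l) = Pi.single u (Pi.single v 1) + pathFlow (v :: l) := by
  funext a b
  simp only [pathFlow, List.zip_cons_cons, List.tail_cons, List.count_cons, Prod.mk.injEq,
    beq_iff_eq, Pi.add_apply, Pi.single_apply, ite_apply, Pi.zero_apply, ite_and]
  push_cast
  grind

theorem pathFlow_eq_zero_or_one {l : List V} (hl : l.Nodup) (a b : V) :
    pathFlow l a b = 0 ∨ pathFlow l a b = 1 := by
  have := List.nodup_iff_count_le_one.1 hl.zip_tail (a, b)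
  unfold pathFlow
  omega

theorem rel_of_pathFlow_ne_zero {r : V → V → Prop} {l : List V} (hl : l.IsChain r) {a b : V}
    (h : pathFlow l a b ≠ 0) : r a b :=
  List.rel_of_mem_zip_tail hl (List.count_pos_iff.1 (by unfold pathFlow at h; omega))

variable [Fintype V]

theorem netInflow_single {G : Type*} [AddCommGroup G] (u v n : V) (g : G) :
    netInflow (Pi.single u (Pi.single v g)) n =
      (Pi.single v g : V → G) n - (Pi.single u g : V → G) n := by
  simp [netInflow, Pi.single_apply, ite_apply]

theorem netInflow_pathFlow (u : V) (l : List V) (n : V) :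
    netInflow (pathFlow (u :: l)) n =
      (Pi.single ((u :: l).getLast (List.cons_ne_nil _ _)) 1 : V → ℤ) n -
        (Pi.single u 1 : V → ℤ) n := by
  induction l generalizing u with
  | nil => simp [netInflow, pathFlow]
  | cons v l ih =>
    rw [pathFlow_cons_cons, netInflow_add, netInflow_single, ih, List.getLast_cons_cons]
    abel

end PathFlow

/-- Flow-conservation path constraints characterize reachability: for a directed graph
`E` on a finite vertex type `V` and distinct vertices `s ≠ f`, there exists a `{0,1}`
assignment `x` on arcs, supported on `E`, satisfying the conservation constraints
(in-flow minus out-flow equals `-1` at `s`, `1` at `f`, `0` elsewhere) iff there is a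
directed path in `E` from `s` to `f`. -/
theorem flow_conservation_iff_reflTransGen
    {V : Type*} [Fintype V] [DecidableEq V]
    (E : V → V → Prop) (s f : V) (hsf : s ≠ f) :
    (∃ x : V → V → ℤ,
      (∀ v w, x v w = 0 ∨ x v w = 1) ∧
      (∀ v w, ¬ E v w → x v w = 0) ∧
      (∀ n : V, (∑ v, x v n) - (∑ w, x n w) =
        if n = s then -1 else if n = f then 1 else 0)) ↔
    Relation.ReflTransGen E s f := by
  constructor
  · rintro ⟨x, h01, hE, hcons⟩
    have hnet (n : V) : netInflow x n = if n = s then -1 else if n = f then 1 else 0 := hcons n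
    have hx (v w : V) : 0 ≤ x v w := by rcases h01 v w with h | h <;> simp [h]
    refine ReflTransGen.mono (fun v w => not_imp_comm.1 (hE v w)) _ _
      (reflTransGen_support_of_netInflow hx ?_ fun n hn => ?_)
    · simp [hnet]
    · rw [hnet]; split_ifs <;> simp_all
  · intro h
    obtain ⟨l, hchain, hnodup, hlast⟩ := List.exists_nodup_isChain_cons_of_reflTransGen h
    refine ⟨pathFlow (s :: l), pathFlow_eq_zero_or_one hnodup,
      fun v w => not_imp_comm.1 (rel_of_pathFlow_ne_zero hchain), fun n => ?_⟩
    change netInflow _ n = _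
    rw [netInflow_pathFlow, hlast, Pi.single_apply, Pi.single_apply]
    split_ifs <;> simp_all
end
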